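/- Let Φ_h be the Störmer–Verlet map for the harmonic oscillator with ω > 0 and step size h satisfying 0 < hω < 2. Then the quadratic form Ẽ(q,p) = (p² + ω²q²)/2 - (h²ω²/4)·(ω²q²/2) (a modified energy) is exactly conserved by Φ_h: Ẽ(Φ_h(q,p)) = Ẽ(q,p) for all (q,p), and hence the Verlet iterates remain bounded for all k. -/

import Mathlib

/-!
The modified energy is `Ẽ(q, p) = (p² + (1 - (hω)²/4) ω² q²) / 2`, a quadratic form invariant
under the Verlet step by direct computation. For `ω ≠ 0` and `|hω| < 2` its `q`-coefficient is positive,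
so `Ẽ` is positive definite and each of its level sets is bounded; an orbit stays on one level set.
-/

noncomputable def verletStep (h ω : ℝ) (x : ℝ × ℝ) : ℝ × ℝ :=
  let p := x.2 - (h / 2) * ω ^ 2 * x.1
  let q := x.1 + h * p
  (q, p - (h / 2) * ω ^ 2 * q)

noncomputable def modifiedEnergy (h ω : ℝ) (x : ℝ × ℝ) : ℝ :=
  (x.2 ^ 2 + ω ^ 2 * x.1 ^ 2) / 2 - (h ^ 2 * ω ^ 2 / 4) * (ω ^ 2 * x.1 ^ 2 / 2)

theorem Prod.norm_le_sqrt_of_weighted_sq_le {a b R : ℝ} (ha : 0 < a) (hb : 0 < b) {x : ℝ × ℝ}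
    (hx : a * x.1 ^ 2 + b * x.2 ^ 2 ≤ R) : ‖x‖ ≤ √(R / min a b) := by
  have hm : 0 < min a b := lt_min ha hb
  have abs_le {t : ℝ} (ht : min a b * t ^ 2 ≤ R) : |t| ≤ √(R / min a b) := by
    rw [← Real.sqrt_sq_eq_abs]
    exact Real.sqrt_le_sqrt ((le_div_iff₀' hm).2 ht)
  rw [Prod.norm_def, Real.norm_eq_abs, Real.norm_eq_abs]
  refine max_le (abs_le ?_) (abs_le ?_)
  · nlinarith [min_le_left a b, min_le_right a b, sq_nonneg x.1, sq_nonneg x.2]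
  · nlinarith [min_le_left a b, min_le_right a b, sq_nonneg x.1, sq_nonneg x.2]

section

variable (h ω : ℝ)

theorem modifiedEnergy_verletStep (x : ℝ × ℝ) :
    modifiedEnergy h ω (verletStep h ω x) = modifiedEnergy h ω x := by
  simp only [modifiedEnergy, verletStep]
  ring

theorem modifiedEnergy_iterate_verletStep (k : ℕ) (x : ℝ × ℝ) :
    modifiedEnergy h ω ((verletStep h ω)^[k] x) = modifiedEnergy h ω x :=
  congrFun (Function.iterate_invariant (g := modifiedEnergy h ω)
    (funext (modifiedEnergy_verletStep h ω)) k) x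

theorem two_mul_modifiedEnergy (x : ℝ × ℝ) :
    2 * modifiedEnergy h ω x = (1 - (h * ω) ^ 2 / 4) * ω ^ 2 * x.1 ^ 2 + 1 * x.2 ^ 2 := by
  simp only [modifiedEnergy]
  ring

variable {h ω}

theorem norm_le_sqrt_modifiedEnergy (hω : ω ≠ 0) (hstable : (h * ω) ^ 2 < 4) (x : ℝ × ℝ) :
    ‖x‖ ≤ √(2 * modifiedEnergy h ω x / min ((1 - (h * ω) ^ 2 / 4) * ω ^ 2) 1) := by
  have hcoeff : 0 < (1 - (h * ω) ^ 2 / 4) * ω ^ 2 := by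
    have : 0 < 1 - (h * ω) ^ 2 / 4 := by linarith
    positivity
  exact Prod.norm_le_sqrt_of_weighted_sq_le hcoeff one_pos (two_mul_modifiedEnergy h ω x).ge

end

theorem verlet_modified_energy_conserved_general (h ω : ℝ)
    (hhω : 0 < h * ω) (hhω2 : h * ω < 2)
    (Φ : ℝ × ℝ → ℝ × ℝ)
    (hΦ : ∀ x : ℝ × ℝ,
      Φ x = (x.1 + h * (x.2 - (h / 2) * ω ^ 2 * x.1),
             (x.2 - (h / 2) * ω ^ 2 * x.1) -
               (h / 2) * ω ^ 2 * (x.1 + h * (x.2 - (h / 2) * ω ^ 2 * x.1))))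
    (Etilde : ℝ × ℝ → ℝ)
    (hEtilde : ∀ x : ℝ × ℝ,
      Etilde x = (x.2 ^ 2 + ω ^ 2 * x.1 ^ 2) / 2 -
        (h ^ 2 * ω ^ 2 / 4) * (ω ^ 2 * x.1 ^ 2 / 2)) :
    (∀ x : ℝ × ℝ, Etilde (Φ x) = Etilde x) ∧
    ∀ x : ℝ × ℝ, ∃ C : ℝ, ∀ k : ℕ, ‖Φ^[k] x‖ ≤ C := by
  obtain rfl : Φ = verletStep h ω := funext hΦ
  obtain rfl : Etilde = modifiedEnergy h ω := funext hEtilde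
  have hω : ω ≠ 0 := by rintro rfl; simp at hhω
  have hstable : (h * ω) ^ 2 < 4 := by nlinarith
  refine ⟨modifiedEnergy_verletStep h ω, fun x =>
    ⟨√(2 * modifiedEnergy h ω x / min ((1 - (h * ω) ^ 2 / 4) * ω ^ 2) 1), fun k => ?_⟩⟩
  simpa only [modifiedEnergy_iterate_verletStep] using
    norm_le_sqrt_modifiedEnergy hω hstable ((verletStep h ω)^[k] x)

/-- For `0 < hω < 2` the Störmer–Verlet map for the harmonic oscillator exactly
conserves the modified energy `Ẽ(q,p) = (p² + ω²q²)/2 - (h²ω²/4)·(ω²q²/2)`, and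
hence its iterates remain bounded. -/
theorem verlet_modified_energy_conserved (h ω : ℝ) (hω : 0 < ω)
    (hhω : 0 < h * ω) (hhω2 : h * ω < 2)
    (Φ : ℝ × ℝ → ℝ × ℝ)
    (hΦ : ∀ x : ℝ × ℝ,
      Φ x = (x.1 + h * (x.2 - (h / 2) * ω ^ 2 * x.1),
             (x.2 - (h / 2) * ω ^ 2 * x.1) -
               (h / 2) * ω ^ 2 * (x.1 + h * (x.2 - (h / 2) * ω ^ 2 * x.1))))
    (Etilde : ℝ × ℝ → ℝ)
    (hEtilde : ∀ x : ℝ × ℝ,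
      Etilde x = (x.2 ^ 2 + ω ^ 2 * x.1 ^ 2) / 2 -
        (h ^ 2 * ω ^ 2 / 4) * (ω ^ 2 * x.1 ^ 2 / 2)) :
    (∀ x : ℝ × ℝ, Etilde (Φ x) = Etilde x) ∧
    ∀ x : ℝ × ℝ, ∃ C : ℝ, ∀ k : ℕ, ‖Φ^[k] x‖ ≤ C :=
  verlet_modified_energy_conserved_general h ω hhω hhω2 Φ hΦ Etilde hEtilde
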